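/- arXiv:2412.19432 — 3 statements merged into one kernel-verified Lean document; each statement's English description precedes it below -/
import Mathlib

section
/- The natural monoid homomorphism ι : B_n → D_n sending each braid generator σ_i to the generator σ_i of D_n (and σ_i^{-1} to σ_i^{-1}) is injective. -/
/-- Generators of the `n`-knit monoid `D_n`: `pos i` is the braid generator σ_{i+1},
`neg i` is its formal inverse σ_{i+1}⁻¹, and `tau i` is the hook pair τ_{i+1},
for `i : Fin (n-1)`. -/
inductive KnitGen (n : ℕ) : Type
  | pos : Fin (n - 1) → KnitGen n
  | neg : Fin (n - 1) → KnitGen n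
  | tau : Fin (n - 1) → KnitGen n

/-- σ_i^ε as a one-letter word: `true` gives σ_i, `false` gives σ_i⁻¹. -/
def KnitGen.sg {n : ℕ} (e : Bool) (i : Fin (n - 1)) : FreeMonoid (KnitGen n) :=
  FreeMonoid.of (if e then KnitGen.pos i else KnitGen.neg i)

open KnitGen in
/-- The defining relations of the `n`-knit monoid `D_n`. -/
inductive KnitRel (n : ℕ) : FreeMonoid (KnitGen n) → FreeMonoid (KnitGen n) → Prop
  | inv_mul (i) : KnitRel n (.of (pos i) * .of (neg i)) 1
  | mul_inv (i) : KnitRel n (.of (neg i) * .of (pos i)) 1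
  | sigma_tau (i) : KnitRel n (.of (pos i) * .of (tau i)) (.of (tau i))
  | tau_sigma (i) : KnitRel n (.of (tau i) * .of (pos i)) (.of (tau i))
  | far_ss (e d : Bool) (i k : Fin (n - 1)) (h : Nat.dist i k > 1) :
      KnitRel n (sg e i * sg d k) (sg d k * sg e i)
  | far_st (e : Bool) (i k : Fin (n - 1)) (h : Nat.dist i k > 1) :
      KnitRel n (sg e i * .of (tau k)) (.of (tau k) * sg e i)
  | far_tt (i k : Fin (n - 1)) (h : Nat.dist i k > 1) :
      KnitRel n (.of (tau i) * .of (tau k)) (.of (tau k) * .of (tau i))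
  | braid (i j : Fin (n - 1)) (h : Nat.dist i j = 1) :
      KnitRel n (.of (pos i) * .of (pos j) * .of (pos i))
                (.of (pos j) * .of (pos i) * .of (pos j))
  | mixed (i j : Fin (n - 1)) (h : Nat.dist i j = 1) :
      KnitRel n (.of (pos i) * .of (pos j) * .of (tau i))
                (.of (tau j) * .of (pos i) * .of (pos j))

/-- The `n`-knit monoid `D_n`, the quotient of the free monoid on the generators by the
congruence generated by the defining relations. -/
abbrev Knit (n : ℕ) : Type := (conGen (KnitRel n)).Quotient

/-- The generator σ_{i+1} of `D_n`. -/
def σK {n : ℕ} (i : Fin (n - 1)) : Knit n :=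
  (conGen (KnitRel n)).mk' (FreeMonoid.of (KnitGen.pos i))

/-- The generator σ_{i+1}⁻¹ of `D_n`. -/
def σK' {n : ℕ} (i : Fin (n - 1)) : Knit n :=
  (conGen (KnitRel n)).mk' (FreeMonoid.of (KnitGen.neg i))

/-- The generator τ_{i+1} of `D_n`. -/
def τK {n : ℕ} (i : Fin (n - 1)) : Knit n :=
  (conGen (KnitRel n)).mk' (FreeMonoid.of (KnitGen.tau i))

/-- The braid relations on `n` strands, as elements of the free group on σ_1,…,σ_{n-1}. -/
def braidRels (n : ℕ) : Set (FreeGroup (Fin (n - 1))) :=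
  {r | (∃ i j : Fin (n - 1), Nat.dist i j > 1 ∧
          r = .of i * .of j * (.of i)⁻¹ * (.of j)⁻¹) ∨
       (∃ i j : Fin (n - 1), Nat.dist i j = 1 ∧
          r = .of i * .of j * .of i * (.of j)⁻¹ * (.of i)⁻¹ * (.of j)⁻¹)}

/-- The braid group `B_n` on `n` strands. -/
abbrev Braid (n : ℕ) : Type := PresentedGroup (braidRels n)


section Aux

variable {n : ℕ}

noncomputable abbrev bGen (n : ℕ) (i : Fin (n - 1)) : Braid n := PresentedGroup.of i

theorem braid_rel_one {r : FreeGroup (Fin (n-1))} (hr : r ∈ braidRels n) :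
    PresentedGroup.mk (braidRels n) r = 1 :=
  (QuotientGroup.eq_one_iff r).mpr (Subgroup.subset_normalClosure hr)

theorem bGen_comm {i j : Fin (n-1)} (h : Nat.dist i j > 1) :
    Commute (bGen n i) (bGen n j) := by
  have := braid_rel_one (n := n) (Or.inl ⟨i, j, h, rfl⟩)
  simp only [map_mul, map_inv] at this
  have h2 : bGen n i * bGen n j * (bGen n i)⁻¹ * (bGen n j)⁻¹ = 1 := this
  rw [← commutatorElement_def] at h2
  exact commutatorElement_eq_one_iff_commute.mp h2

theorem bGen_braid {i j : Fin (n-1)} (h : Nat.dist i j = 1) :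
    bGen n i * bGen n j * bGen n i = bGen n j * bGen n i * bGen n j := by
  have := braid_rel_one (n := n) (Or.inr ⟨i, j, h, rfl⟩)
  simp only [map_mul, map_inv] at this
  have h2 : bGen n i * bGen n j * bGen n i * (bGen n j)⁻¹ * (bGen n i)⁻¹ * (bGen n j)⁻¹ = 1 := this
  have := congrArg (· * (bGen n j * bGen n i * bGen n j)) h2
  simpa [mul_assoc] using this

noncomputable def fGen (n : ℕ) : KnitGen n → WithZero (Braid n)
  | .pos i => (bGen n i : Braid n)
  | .neg i => ((bGen n i : Braid n) : WithZero (Braid n))⁻¹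
  | .tau _ => 0

noncomputable def π0 (n : ℕ) : FreeMonoid (KnitGen n) →* WithZero (Braid n) :=
  FreeMonoid.lift (fGen n)

theorem π0_sg (e : Bool) (i : Fin (n-1)) :
    π0 n (KnitGen.sg e i) = if e then ((bGen n i : Braid n) : WithZero (Braid n))
      else ((bGen n i : Braid n) : WithZero (Braid n))⁻¹ := by
  cases e <;> simp [KnitGen.sg, π0, fGen]

theorem ker_le : conGen (KnitRel n) ≤ Con.ker (π0 n) := by
  refine Con.conGen_le.mpr (fun x y hxy => ?_)
  rw [Con.ker_rel]
  induction hxy with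
  | inv_mul i => simp [π0, fGen]
  | mul_inv i => simp [π0, fGen]
  | sigma_tau i => simp [π0, fGen]
  | tau_sigma i => simp [π0, fGen]
  | far_ss e d i k h =>
      have hg : Commute (bGen n i) (bGen n k) := bGen_comm h
      cases e <;> cases d <;>
        simp only [map_mul, π0_sg, Bool.false_eq_true, if_false, if_true,
          ← WithZero.coe_inv, ← WithZero.coe_mul, WithZero.coe_inj] <;>
        first
          | exact hg.eq
          | exact hg.inv_left.eq
          | exact hg.inv_right.eq
          | exact hg.inv_left.inv_right.eq
  | far_st e i k h => cases e <;> simp [π0, fGen, KnitGen.sg]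
  | far_tt i k h => simp [π0, fGen]
  | braid i j h =>
      have := bGen_braid (n := n) h
      simp only [map_mul, π0, FreeMonoid.lift_eval_of, fGen]
      exact_mod_cast this
  | mixed i j h => simp [π0, fGen]

noncomputable def πK (n : ℕ) : Knit n →* WithZero (Braid n) :=
  Con.lift _ (π0 n) ker_le

theorem πK_σK (i : Fin (n-1)) : πK n (σK i) = ((bGen n i : Braid n) : WithZero (Braid n)) := by
  simp [πK, σK, π0, fGen]

end Aux

/-- The natural monoid homomorphism `ι : B_n → D_n`, sending σ_i to σ_i and σ_i⁻¹ to σ_i⁻¹,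
is injective. -/
theorem stmt8 (n : ℕ) (hn : 2 ≤ n) (ι : Braid n →* Knit n)
    (h1 : ∀ i : Fin (n - 1), ι (PresentedGroup.of i) = σK i)
    (h2 : ∀ i : Fin (n - 1), ι ((PresentedGroup.of i : Braid n)⁻¹) = σK' i) :
    Function.Injective ι := by
  have key : ∀ a : Braid n, πK n (ι a) = (a : WithZero (Braid n)) := by
    intro a
    have ha : a ∈ Subgroup.closure (Set.range (PresentedGroup.of : Fin (n-1) → Braid n)) := by
      rw [PresentedGroup.closure_range_of]; trivial
    induction ha using Subgroup.closure_induction with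
    | mem x hx =>
        obtain ⟨i, rfl⟩ := hx
        rw [h1 i, πK_σK]
    | one => simp
    | mul x y _ _ hx hy => rw [map_mul, map_mul, hx, hy]; push_cast; ring
    | inv x _ hx =>
        have : πK n (ι x⁻¹) * (x : WithZero (Braid n)) = 1 := by
          rw [← hx, ← map_mul, ← map_mul, inv_mul_cancel, map_one, map_one]
        have h3 := eq_inv_of_mul_eq_one_left this
        rw [h3, WithZero.coe_inv]
  intro a b hab
  have := key a
  rw [hab, key b] at this
  exact (WithZero.coe_inj.mp this).symm
end

section
/- An element of the n-knit monoid D_n is invertible if and only if it belongs to the image of the natural homomorphism ι : B_n → D_n; that is, the group of units of D_n is exactly ι(B_n). -/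
def wtK {n : ℕ} : KnitGen n → ℕ
  | .pos _ => 1
  | .neg _ => 1
  | .tau _ => 0

def fWK (n : ℕ) : FreeMonoid (KnitGen n) →* ℕ := FreeMonoid.lift wtK

@[simp] lemma fWK_of {n : ℕ} (g : KnitGen n) : fWK n (FreeMonoid.of g) = wtK g := by
  simp [fWK]

@[simp] lemma fWK_sg {n : ℕ} (e : Bool) (i : Fin (n - 1)) :
    fWK n (KnitGen.sg e i) = 1 := by
  cases e <;> simp [KnitGen.sg, wtK]

lemma fWK_rel {n : ℕ} {a b : FreeMonoid (KnitGen n)} (h : KnitRel n a b) :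
    fWK n a = fWK n b := by
  cases h <;> simp [wtK]

lemma fWK_rel' {n : ℕ} {a b : FreeMonoid (KnitGen n)} (h : KnitRel n a b) :
    fWK n a = fWK n b := fWK_rel h

/-- An element of `D_n` is invertible iff it lies in the image of the natural homomorphism
`ι : B_n → D_n`; i.e. the units of `D_n` are exactly `ι(B_n)`. -/
theorem stmt9 (n : ℕ) (hn : 2 ≤ n) (ι : Braid n →* Knit n)
    (h1 : ∀ i : Fin (n - 1), ι (PresentedGroup.of i) = σK i)
    (h2 : ∀ i : Fin (n - 1), ι ((PresentedGroup.of i : Braid n)⁻¹) = σK' i) :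
    ∀ x : Knit n, IsUnit x ↔ x ∈ Set.range ι := by
  have hker : conGen (KnitRel n) ≤ Con.ker (fWK n) := by
    apply Con.conGen_le.mpr
    intro a b hab
    exact fWK_rel hab
  let φ : Knit n →* ℕ := Con.lift _ (fWK n) hker
  have hφ : ∀ w, φ ((conGen (KnitRel n)).mk' w) = fWK n w := fun w => rfl
  have key : ∀ l : List (KnitGen n),
      fWK n (FreeMonoid.ofList l) = 1 →
      (conGen (KnitRel n)).mk' (FreeMonoid.ofList l) ∈ Set.range ι := by
    intro l
    induction l with
    | nil =>
      intro _
      exact ⟨1, by simpa using (map_one ι).symm⟩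
    | cons a l ih =>
      intro hl
      have hsplit : (FreeMonoid.ofList (a :: l) : FreeMonoid (KnitGen n))
          = FreeMonoid.of a * FreeMonoid.ofList l := rfl
      rw [hsplit, map_mul] at hl ⊢
      have h11 : fWK n (FreeMonoid.of a) = 1 := Nat.eq_one_of_mul_eq_one_right hl
      have h12 : fWK n (FreeMonoid.ofList l) = 1 := Nat.eq_one_of_mul_eq_one_left hl
      obtain ⟨b, hb⟩ := ih h12
      cases a with
      | pos i =>
        refine ⟨PresentedGroup.of i * b, ?_⟩
        rw [map_mul, h1, hb]; rfl
      | neg i =>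
        refine ⟨(PresentedGroup.of i)⁻¹ * b, ?_⟩
        rw [map_mul, h2, hb]; rfl
      | tau i =>
        simp [fWK, wtK] at h11
  intro x
  constructor
  · intro hx
    obtain ⟨w, rfl⟩ := Con.mk'_surjective x
    have hu : IsUnit (φ ((conGen (KnitRel n)).mk' w)) := hx.map φ
    rw [hφ] at hu
    have h1' : fWK n w = 1 := Nat.isUnit_iff.mp hu
    have := key w.toList (by simpa using h1')
    simpa using this
  · rintro ⟨b, rfl⟩
    exact ⟨⟨ι b, ι b⁻¹, by rw [← map_mul, mul_inv_cancel, map_one],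
      by rw [← map_mul, inv_mul_cancel, map_one]⟩, rfl⟩
end

section
/- In the 2-knit monoid D_2 (with σ := σ_1, τ := τ_1): (a) σ^m = σ^n implies m = n for integers m, n; (b) τ^j = τ^k implies j = k for positive integers j, k; and (c) σ^m ≠ τ^k for every integer m and positive integer k. Consequently D_2 is in bijection with ℤ ⊔ {1, 2, 3, …}. -/
abbrev KM := ℤ ⊕ ℕ

def KM.mul : KM → KM → KM
  | .inl a, .inl b => .inl (a + b)
  | .inl _, .inr k => .inr k
  | .inr k, .inl _ => .inr k
  | .inr j, .inr k => .inr (j + k)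

instance : Monoid KM where
  mul := KM.mul
  one := Sum.inl 0
  mul_assoc a b c := by
    rcases a with a|a <;> rcases b with b|b <;> rcases c with c|c <;>
      simp [HMul.hMul, Mul.mul, KM.mul, add_assoc]
  one_mul a := by rcases a with a|a <;> simp [HMul.hMul, Mul.mul, KM.mul, One.one]
  mul_one a := by rcases a with a|a <;> simp [HMul.hMul, Mul.mul, KM.mul, One.one]

@[simp] lemma KM.inl_mul_inl (a b : ℤ) : (Sum.inl a : KM) * Sum.inl b = Sum.inl (a + b) := rfl
@[simp] lemma KM.inl_mul_inr (a : ℤ) (k : ℕ) : (Sum.inl a : KM) * Sum.inr k = Sum.inr k := rfl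
@[simp] lemma KM.inr_mul_inl (k : ℕ) (a : ℤ) : (Sum.inr k : KM) * Sum.inl a = Sum.inr k := rfl
@[simp] lemma KM.inr_mul_inr (j k : ℕ) : (Sum.inr j : KM) * Sum.inr k = Sum.inr (j + k) := rfl
@[simp] lemma KM.one_def : (1 : KM) = Sum.inl 0 := rfl

lemma KM.inl_pow (a : ℤ) (t : ℕ) : (Sum.inl a : KM) ^ t = Sum.inl (t * a) := by
  induction t with
  | zero => simp
  | succ n ih => rw [pow_succ, ih]; simp; ring

lemma KM.inr_pow (k : ℕ) (hk : 1 ≤ k) : (Sum.inr 1 : KM) ^ k = Sum.inr k := by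
  induction k with
  | zero => omega
  | succ n ih =>
      rcases Nat.eq_or_lt_of_le hk with h | h
      · simp [← h]
      · rw [pow_succ, ih (by omega)]; simp


/-- σ_i^k for k ∈ ℤ: the |k|-fold product of σ_i if k ≥ 0 and of σ_i⁻¹ if k < 0. -/
def σpow {n : ℕ} (i : Fin (n - 1)) (k : ℤ) : Knit n :=
  if 0 ≤ k then (σK i) ^ k.toNat else (σK' i) ^ (-k).toNat


-- the evaluation on generators
def knitEval : KnitGen 2 → KM
  | .pos _ => Sum.inl 1
  | .neg _ => Sum.inl (-1)
  | .tau _ => Sum.inr 1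

def knitF : FreeMonoid (KnitGen 2) →* KM := FreeMonoid.lift knitEval

lemma fin1_eq (i : Fin (2 - 1)) : i = 0 := by
  ext
  have := i.isLt
  omega

def φK : Knit 2 →* KM :=
  Con.lift _ knitF (by
    refine Con.conGen_le.2 ?_
    rintro x y h
    show knitF x = knitF y
    cases h with
    | inv_mul i => simp [knitF, knitEval]
    | mul_inv i => simp [knitF, knitEval]
    | sigma_tau i => simp [knitF, knitEval]
    | tau_sigma i => simp [knitF, knitEval]
    | far_ss e d i k h => rw [fin1_eq i, fin1_eq k] at h; simp [Nat.dist] at h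
    | far_st e i k h => rw [fin1_eq i, fin1_eq k] at h; simp [Nat.dist] at h
    | far_tt i k h => rw [fin1_eq i, fin1_eq k] at h; simp [Nat.dist] at h
    | braid i j h => rw [fin1_eq i, fin1_eq j] at h; simp [Nat.dist] at h
    | mixed i j h => rw [fin1_eq i, fin1_eq j] at h; simp [Nat.dist] at h)

@[simp] lemma φK_σ : φK (σK (0 : Fin (2-1))) = Sum.inl 1 := rfl
@[simp] lemma φK_σ' : φK (σK' (0 : Fin (2-1))) = Sum.inl (-1) := rfl
@[simp] lemma φK_τ : φK (τK (0 : Fin (2-1))) = Sum.inr 1 := rfl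

lemma φK_σpow (m : ℤ) : φK (σpow (0 : Fin (2-1)) m) = Sum.inl m := by
  unfold σpow
  split
  · rw [map_pow, φK_σ, KM.inl_pow]
    simp; omega
  · rw [map_pow, φK_σ', KM.inl_pow]
    simp; omega

lemma φK_τpow (k : ℕ) (hk : 1 ≤ k) : φK (τK (0 : Fin (2-1)) ^ k) = Sum.inr k := by
  rw [map_pow, φK_τ, KM.inr_pow k hk]

-- relations in the quotient
lemma rel_mk {x y : FreeMonoid (KnitGen 2)} (h : KnitRel 2 x y) :
    (conGen (KnitRel 2)).mk' x = (conGen (KnitRel 2)).mk' y :=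
  Con.eq _ |>.mpr (ConGen.Rel.of _ _ h)

lemma hss' : σK (0 : Fin (2-1)) * σK' 0 = 1 := by
  have := rel_mk (KnitRel.inv_mul (0 : Fin (2-1)))
  simpa [σK, σK', map_mul] using this

lemma hs's : σK' (0 : Fin (2-1)) * σK 0 = 1 := by
  have := rel_mk (KnitRel.mul_inv (0 : Fin (2-1)))
  simpa [σK, σK', map_mul] using this

lemma hst : σK (0 : Fin (2-1)) * τK 0 = τK 0 := by
  have := rel_mk (KnitRel.sigma_tau (0 : Fin (2-1)))
  simpa [σK, τK, map_mul] using this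

lemma hts : τK (0 : Fin (2-1)) * σK 0 = τK 0 := by
  have := rel_mk (KnitRel.tau_sigma (0 : Fin (2-1)))
  simpa [σK, τK, map_mul] using this

lemma hs't : σK' (0 : Fin (2-1)) * τK 0 = τK 0 := by
  calc σK' (0 : Fin (2-1)) * τK 0 = σK' 0 * (σK 0 * τK 0) := by rw [hst]
  _ = (σK' 0 * σK 0) * τK 0 := by rw [mul_assoc]
  _ = τK 0 := by rw [hs's, one_mul]

lemma hts' : τK (0 : Fin (2-1)) * σK' 0 = τK 0 := by
  calc τK (0 : Fin (2-1)) * σK' 0 = (τK 0 * σK 0) * σK' 0 := by rw [hts]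
  _ = τK 0 * (σK 0 * σK' 0) := by rw [mul_assoc]
  _ = τK 0 := by rw [hss', mul_one]

lemma s_mul_σpow (m : ℤ) : σK (0 : Fin (2-1)) * σpow 0 m = σpow 0 (m + 1) := by
  unfold σpow
  split <;> split
  · rw [← pow_succ']
    congr 1; omega
  · omega
  · -- m < 0, m+1 ≥ 0, so m = -1
    have hm : m = -1 := by omega
    subst hm
    norm_num [pow_one, hss']
  · -- m < -1
    have h1 : (-m).toNat = (-(m+1)).toNat + 1 := by omega
    rw [h1, pow_succ', ← mul_assoc, hss', one_mul]

lemma s'_mul_σpow (m : ℤ) : σK' (0 : Fin (2-1)) * σpow 0 m = σpow 0 (m - 1) := by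
  unfold σpow
  split <;> split
  · -- m ≥ 0 and m-1 ≥ 0 so m ≥ 1
    have h1 : m.toNat = (m-1).toNat + 1 := by omega
    rw [h1, pow_succ', ← mul_assoc, hs's, one_mul]
  · -- m ≥ 0, m - 1 < 0 so m = 0
    have hm : m = 0 := by omega
    subst hm
    norm_num [pow_one]
  · omega
  · rw [← pow_succ']
    congr 1; omega

lemma t_mul_σpow (m : ℤ) : τK (0 : Fin (2-1)) * σpow 0 m = τK 0 := by
  unfold σpow
  have key : ∀ (x : Knit 2), τK (0 : Fin (2-1)) * x = τK 0 → ∀ t : ℕ, τK 0 * x ^ t = τK 0 := by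
    intro x hx t
    induction t with
    | zero => simp
    | succ n ih => rw [pow_succ', ← mul_assoc, hx, ih]
  split
  · exact key _ hts _
  · exact key _ hts' _

lemma s_mul_τpow (k : ℕ) (hk : 1 ≤ k) :
    σK (0 : Fin (2-1)) * τK 0 ^ k = τK 0 ^ k := by
  obtain ⟨j, rfl⟩ := Nat.exists_eq_add_of_le hk
  rw [pow_add, pow_one, ← mul_assoc, hst]

lemma s'_mul_τpow (k : ℕ) (hk : 1 ≤ k) :
    σK' (0 : Fin (2-1)) * τK 0 ^ k = τK 0 ^ k := by
  obtain ⟨j, rfl⟩ := Nat.exists_eq_add_of_le hk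
  rw [pow_add, pow_one, ← mul_assoc, hs't]

@[simp] lemma coe_pos :
    ((FreeMonoid.of (KnitGen.pos (0 : Fin (2-1))) : FreeMonoid (KnitGen 2)) : Knit 2) = σK 0 := rfl
@[simp] lemma coe_neg :
    ((FreeMonoid.of (KnitGen.neg (0 : Fin (2-1))) : FreeMonoid (KnitGen 2)) : Knit 2) = σK' 0 := rfl
@[simp] lemma coe_tau :
    ((FreeMonoid.of (KnitGen.tau (0 : Fin (2-1))) : FreeMonoid (KnitGen 2)) : Knit 2) = τK 0 := rfl

lemma normal_form (x : Knit 2) :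
    (∃ m : ℤ, x = σpow (0 : Fin (2-1)) m) ∨ (∃ k : ℕ, 1 ≤ k ∧ x = τK (0 : Fin (2-1)) ^ k) := by
  induction x using Con.induction_on with
  | H w =>
    induction w using FreeMonoid.recOn with
    | one =>
      left; exact ⟨0, by simp [σpow]⟩
    | of_mul a w ih =>
      rw [Con.coe_mul]
      cases a with
      | pos i =>
        rw [fin1_eq i, coe_pos]
        rcases ih with ⟨m, hm⟩ | ⟨k, hk, hkk⟩
        · rw [hm]; exact .inl ⟨m + 1, s_mul_σpow m⟩
        · rw [hkk]; exact .inr ⟨k, hk, s_mul_τpow k hk⟩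
      | neg i =>
        rw [fin1_eq i, coe_neg]
        rcases ih with ⟨m, hm⟩ | ⟨k, hk, hkk⟩
        · rw [hm]; exact .inl ⟨m - 1, s'_mul_σpow m⟩
        · rw [hkk]; exact .inr ⟨k, hk, s'_mul_τpow k hk⟩
      | tau i =>
        rw [fin1_eq i, coe_tau]
        rcases ih with ⟨m, hm⟩ | ⟨k, hk, hkk⟩
        · rw [hm]
          refine .inr ⟨1, le_refl _, ?_⟩
          rw [pow_one]
          exact t_mul_σpow m
        · rw [hkk]
          refine .inr ⟨k + 1, by omega, ?_⟩
          rw [pow_succ']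

def gK : ℤ ⊕ ℕ+ → Knit 2
  | .inl m => σpow (0 : Fin (2-1)) m
  | .inr k => τK (0 : Fin (2-1)) ^ (k : ℕ)

@[simp] lemma gK_inl (m : ℤ) : gK (.inl m) = σpow (0 : Fin (2-1)) m := rfl
@[simp] lemma gK_inr (k : ℕ+) : gK (.inr k) = τK (0 : Fin (2-1)) ^ (k : ℕ) := rfl


/-- In `D_2`: powers of σ are pairwise distinct, positive powers of τ are pairwise distinct,
no power of σ is a positive power of τ; consequently `D_2` is in bijection with ℤ ⊔ ℕ_{≥1}. -/
theorem stmt15 :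
    (∀ m k : ℤ, σpow (0 : Fin (2 - 1)) m = σpow 0 k → m = k) ∧
    (∀ j k : ℕ, 1 ≤ j → 1 ≤ k → τK (0 : Fin (2 - 1)) ^ j = τK 0 ^ k → j = k) ∧
    (∀ (m : ℤ) (k : ℕ), 1 ≤ k → σpow (0 : Fin (2 - 1)) m ≠ τK 0 ^ k) ∧
    Nonempty (Knit 2 ≃ (ℤ ⊕ ℕ+)) := by
  refine ⟨?_, ?_, ?_, ?_⟩
  · intro m k h
    have := congrArg φK h
    rw [φK_σpow, φK_σpow] at this
    exact Sum.inl_injective this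
  · intro j k hj hk h
    have := congrArg φK h
    rw [φK_τpow j hj, φK_τpow k hk] at this
    exact Sum.inr_injective this
  · intro m k hk h
    have := congrArg φK h
    rw [φK_σpow, φK_τpow k hk] at this
    exact Sum.inl_ne_inr this
  · refine ⟨(Equiv.ofBijective gK ⟨?_, ?_⟩).symm⟩
    · rintro (m | j) (m' | j') h
      · have := congrArg φK h
        rw [gK_inl, gK_inl, φK_σpow, φK_σpow] at this
        exact congrArg Sum.inl (Sum.inl_injective this)
      · have hj' : 1 ≤ (j' : ℕ) := j'.pos
        have := congrArg φK h
        rw [gK_inl, gK_inr, φK_σpow, φK_τpow _ hj'] at this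
        exact absurd this (Sum.inl_ne_inr)
      · have hj : 1 ≤ (j : ℕ) := j.pos
        have := congrArg φK h
        rw [gK_inr, gK_inl, φK_τpow _ hj, φK_σpow] at this
        exact absurd this (Sum.inr_ne_inl)
      · have hj : 1 ≤ (j : ℕ) := j.pos
        have hj' : 1 ≤ (j' : ℕ) := j'.pos
        have := congrArg φK h
        rw [gK_inr, gK_inr, φK_τpow _ hj, φK_τpow _ hj'] at this
        exact congrArg Sum.inr (PNat.coe_injective (Sum.inr_injective this))
    · intro x
      rcases normal_form x with ⟨m, rfl⟩ | ⟨k, hk, rfl⟩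
      · exact ⟨.inl m, rfl⟩
      · exact ⟨.inr ⟨k, hk⟩, rfl⟩
end
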